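/- arXiv:2506.08345 — 7 statements merged into one kernel-verified Lean document; each statement's English description precedes it below -/
import Mathlib

section
/- If M is an mn×mn matrix partitioned into n² blocks each of which is an m×m circulant matrix, then det(M) = det(det_{𝒞^m}(M)), where det_{𝒞^m}(M) is the m×m circulant matrix obtained by computing the determinant of the n×n matrix of blocks within the commutative ring of m×m circulant matrices. -/
open Matrix Complex

namespace SilvesterAux

variable {m : ℕ} [NeZero m]

/-- The DFT-like matrix. -/
noncomputable def F (m : ℕ) (ω : ℂ) : Matrix (Fin m) (Fin m) ℂ :=
  Matrix.of fun i j => ω ^ ((i : ℕ) * (j : ℕ))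

/-- The eigenvalues of a circulant matrix. -/
noncomputable def lam (m : ℕ) (ω : ℂ) (w : Fin m → ℂ) : Fin m → ℂ :=
  fun j => ∑ t, w t * ω ^ (-(((t : ℕ) * (j : ℕ) : ℕ) : ℤ))

variable {ω : ℂ} (hω0 : ω ≠ 0) (hω1 : ω ^ m = 1)

omit [NeZero m] in include hω1 in
theorem hadd (a b : Fin m) : ω ^ ((a + b : Fin m) : ℕ) = ω ^ (a : ℕ) * ω ^ (b : ℕ) := by
  rw [Fin.val_add, ← pow_eq_pow_mod _ hω1, pow_add]

include hω0 hω1 in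
theorem zsub (a b : Fin m) :
    (ω ^ ((a - b : Fin m) : ℕ) : ℂ) = ω ^ (((a : ℕ) : ℤ) - ((b : ℕ) : ℤ)) := by
  have h := hadd hω1 (a - b) b
  rw [sub_add_cancel] at h
  rw [zpow_sub₀ hω0, zpow_natCast, zpow_natCast, eq_div_iff (pow_ne_zero _ hω0)]
  exact h.symm

include hω0 hω1 in
theorem keyA (w : Fin m → ℂ) :
    Matrix.circulant w * F m ω = F m ω * Matrix.diagonal (lam m ω w) := by
  ext i j
  rw [Matrix.mul_apply, Matrix.mul_diagonal]
  show (∑ k, w (i - k) * ω ^ ((k : ℕ) * (j : ℕ)))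
    = ω ^ ((i : ℕ) * (j : ℕ)) * ∑ t, w t * ω ^ (-(((t : ℕ) * (j : ℕ) : ℕ) : ℤ))
  rw [Finset.mul_sum]
  refine (Fintype.sum_equiv (Equiv.subLeft i) _ _ ?_).symm
  intro t
  simp only [Equiv.subLeft_apply, sub_sub_cancel]
  have h1 : (ω ^ (((i - t : Fin m) : ℕ) * (j : ℕ)) : ℂ)
      = (ω ^ ((i - t : Fin m) : ℕ)) ^ (j : ℕ) := by rw [pow_mul]
  rw [h1, zsub hω0 hω1, ← zpow_natCast (ω ^ ((((i : ℕ) : ℤ) - ((t : ℕ) : ℤ)))) (j : ℕ),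
    ← _root_.zpow_mul, ← zpow_natCast ω ((i : ℕ) * (j : ℕ)), mul_left_comm,
    ← zpow_add₀ hω0]
  congr 2
  push_cast
  ring

end SilvesterAux

open SilvesterAux in
/-- Silvester's theorem for circulant blocks: if M is an mn×mn matrix made of n² blocks,
each an m×m circulant matrix, then det M = det (det_{𝒞^m} M), where det_{𝒞^m} M is the
m×m (circulant) matrix obtained from the Leibniz formula applied to the n×n matrix of
blocks (the product of blocks taken in any fixed order, as circulant matrices commute). -/
theorem stmt_5 (m n : ℕ) (v : Fin n → Fin n → Fin m → ℂ) :
    (Matrix.of fun p q : Fin n × Fin m =>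
        Matrix.circulant (v p.1 q.1) p.2 q.2).det =
      (∑ σ : Equiv.Perm (Fin n), (Equiv.Perm.sign σ : ℤ) •
          ((List.finRange n).map fun i => Matrix.circulant (v i (σ i))).prod).det := by
  rcases Nat.eq_zero_or_pos m with hm | hm
  · subst hm
    rw [Matrix.det_isEmpty, Matrix.det_isEmpty]
  haveI : NeZero m := ⟨hm.ne'⟩
  -- set up the primitive root
  set ω : ℂ := Complex.exp (2 * Real.pi * Complex.I / m) with hωdef
  have hprim : IsPrimitiveRoot ω m := Complex.isPrimitiveRoot_exp m hm.ne'
  have hω1 : ω ^ m = 1 := hprim.pow_eq_one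
  have hω0 : ω ≠ 0 := by
    intro h
    rw [h, zero_pow hm.ne'] at hω1
    exact one_ne_zero hω1.symm
  -- determinant of F is nonzero
  have hFv : F m ω = Matrix.vandermonde (fun i : Fin m => ω ^ (i : ℕ)) := by
    ext i j
    simp [F, Matrix.vandermonde, pow_mul]
  have hFdet : (F m ω).det ≠ 0 := by
    rw [hFv, Matrix.det_vandermonde_ne_zero_iff]
    intro a b hab
    exact Fin.val_injective (hprim.pow_inj a.isLt b.isLt hab)
  -- the transfer property
  set Φ : Matrix (Fin m) (Fin m) ℂ → (Fin m → ℂ) → Prop :=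
    fun N μ => N * F m ω = F m ω * Matrix.diagonal μ with hΦ
  have hmul : ∀ {N₁ N₂ μ₁ μ₂}, Φ N₁ μ₁ → Φ N₂ μ₂ → Φ (N₁ * N₂) (μ₁ * μ₂) := by
    intro N₁ N₂ μ₁ μ₂ h1 h2
    show N₁ * N₂ * F m ω = _
    rw [Matrix.mul_assoc, h2, ← Matrix.mul_assoc, h1, Matrix.mul_assoc,
      Matrix.diagonal_mul_diagonal]
    rfl
  have hone : Φ 1 1 := by
    show (1 : Matrix (Fin m) (Fin m) ℂ) * F m ω = _
    have : Matrix.diagonal (1 : Fin m → ℂ) = 1 := Matrix.diagonal_one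
    rw [this, one_mul, mul_one]
  have hlist : ∀ l : List (Fin m → ℂ),
      Φ ((l.map Matrix.circulant).prod) ((l.map (lam m ω)).prod) := by
    intro l
    induction l with
    | nil =>
        rw [List.map_nil, List.map_nil, List.prod_nil, List.prod_nil]
        exact hone
    | cons a l ih =>
        rw [List.map_cons, List.map_cons, List.prod_cons, List.prod_cons]
        exact hmul (keyA hω0 hω1 a) ih
  have hsum : ∀ (N : Equiv.Perm (Fin n) → Matrix (Fin m) (Fin m) ℂ)
      (μ : Equiv.Perm (Fin n) → Fin m → ℂ), (∀ s, Φ (N s) (μ s)) →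
      Φ (∑ s, N s) (∑ s, μ s) := by
    intro N μ h
    show (∑ s, N s) * F m ω = _
    rw [Matrix.sum_mul]
    have : Matrix.diagonal (∑ s, μ s) = ∑ s, Matrix.diagonal (μ s) :=
      map_sum (Matrix.diagonalAddMonoidHom (Fin m) ℂ) μ Finset.univ
    rw [this, Matrix.mul_sum]
    exact Finset.sum_congr rfl fun s _ => h s
  have hzsmul : ∀ (z : ℤ) {N μ}, Φ N μ → Φ (z • N) (z • μ) := by
    intro z N μ h
    show (z • N) * F m ω = _
    rw [smul_mul_assoc, h, Matrix.diagonal_smul, mul_smul_comm]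
  have hdet : ∀ {N μ}, Φ N μ → N.det = ∏ j, μ j := by
    intro N μ h
    have h' := congrArg Matrix.det h
    rw [Matrix.det_mul, Matrix.det_mul, Matrix.det_diagonal, mul_comm] at h'
    exact mul_left_cancel₀ hFdet h'
  -- the RHS
  set μσ : Equiv.Perm (Fin n) → Fin m → ℂ :=
    fun σ => ((List.finRange n).map fun i => lam m ω (v i (σ i))).prod with hμσ
  have hN : Φ (∑ σ : Equiv.Perm (Fin n), (Equiv.Perm.sign σ : ℤ) •
          ((List.finRange n).map fun i => Matrix.circulant (v i (σ i))).prod)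
      (∑ σ : Equiv.Perm (Fin n), (Equiv.Perm.sign σ : ℤ) • μσ σ) := by
    refine hsum _ _ fun σ => hzsmul _ ?_
    have h1 := hlist ((List.finRange n).map fun i => v i (σ i))
    rw [List.map_map, List.map_map] at h1
    exact h1
  -- eigenvalue matrices
  set A : Fin m → Matrix (Fin n) (Fin n) ℂ :=
    fun k => Matrix.of fun p q : Fin n => lam m ω (v p q) k with hA
  have hd : ∀ j, (∑ σ : Equiv.Perm (Fin n), (Equiv.Perm.sign σ : ℤ) • μσ σ) j
      = (A j).det := by
    intro j
    rw [← Matrix.det_transpose, Matrix.det_apply, Finset.sum_apply]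
    refine Finset.sum_congr rfl fun σ _ => ?_
    have hl : ((Equiv.Perm.sign σ : ℤ) • μσ σ) j = (Equiv.Perm.sign σ : ℤ) • (μσ σ j) := rfl
    rw [hl, Units.smul_def]
    congr 1
    show μσ σ j = _
    rw [hμσ]
    show (((List.finRange n).map fun i => lam m ω (v i (σ i))).prod) j = _
    rw [Pi.list_prod_apply, List.map_map, ← Fin.prod_univ_def]
    exact Finset.prod_congr rfl fun i _ => rfl
  have hRHS : (∑ σ : Equiv.Perm (Fin n), (Equiv.Perm.sign σ : ℤ) •
          ((List.finRange n).map fun i => Matrix.circulant (v i (σ i))).prod).det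
      = ∏ j, (A j).det := by
    rw [hdet hN]
    exact Finset.prod_congr rfl fun j _ => hd j
  -- the LHS via block structure
  set E := Matrix.compRingEquiv (Fin n) (Fin m) ℂ with hE
  set Mblk : Matrix (Fin n) (Fin n) (Matrix (Fin m) (Fin m) ℂ) :=
    Matrix.of fun p q => Matrix.circulant (v p q) with hMblk
  set Fblk : Matrix (Fin n) (Fin n) (Matrix (Fin m) (Fin m) ℂ) :=
    Matrix.diagonal (fun _ => F m ω) with hFblk
  set Dblk : Matrix (Fin n) (Fin n) (Matrix (Fin m) (Fin m) ℂ) :=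
    Matrix.of fun p q => Matrix.diagonal (lam m ω (v p q)) with hDblk
  have hblk : Mblk * Fblk = Fblk * Dblk := by
    refine Matrix.ext fun p q => ?_
    rw [hFblk, Matrix.mul_diagonal, Matrix.diagonal_mul]
    exact keyA hω0 hω1 (v p q)
  have hEblk : E Mblk * E Fblk = E Fblk * E Dblk := by
    rw [← _root_.map_mul E Mblk Fblk, ← _root_.map_mul E Fblk Dblk, hblk]
  -- identify E Mblk with the LHS matrix
  have hEM : E Mblk = Matrix.of fun p q : Fin n × Fin m =>
      Matrix.circulant (v p.1 q.1) p.2 q.2 := rfl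
  -- determinant of E Fblk
  have hEF : E Fblk = (Matrix.blockDiagonal fun _ : Fin n => F m ω).reindex
      (Equiv.prodComm (Fin m) (Fin n)) (Equiv.prodComm (Fin m) (Fin n)) := by
    ext ⟨p, i⟩ ⟨q, j⟩
    show Fblk p q i j = _
    rw [hFblk, Matrix.reindex_apply, Matrix.submatrix_apply]
    rw [show (Equiv.prodComm (Fin m) (Fin n)).symm (p, i) = (i, p) from rfl,
      show (Equiv.prodComm (Fin m) (Fin n)).symm (q, j) = (j, q) from rfl]
    rw [Matrix.blockDiagonal_apply, Matrix.diagonal_apply]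
    by_cases h : p = q
    · simp [h]
    · simp [h]
  have hEFdet : (E Fblk).det = (F m ω).det ^ n := by
    rw [hEF, Matrix.det_reindex_self, Matrix.det_blockDiagonal, Finset.prod_const,
      Finset.card_univ, Fintype.card_fin]
  -- determinant of E Dblk
  have hED : E Dblk = Matrix.blockDiagonal A := by
    ext ⟨p, i⟩ ⟨q, j⟩
    show Dblk p q i j = _
    rw [hDblk, Matrix.blockDiagonal_apply]
    show Matrix.diagonal (lam m ω (v p q)) i j = _
    rw [Matrix.diagonal_apply]
    by_cases h : i = j
    · simp [h, hA, lam]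
    · simp [h]
  have hEDdet : (E Dblk).det = ∏ k, (A k).det := by
    rw [hED, Matrix.det_blockDiagonal]
  -- conclude
  have hdetEq := congrArg Matrix.det hEblk
  rw [Matrix.det_mul, Matrix.det_mul, hEFdet, hEDdet, hEM] at hdetEq
  have hpow : (F m ω).det ^ n ≠ 0 := pow_ne_zero _ hFdet
  rw [hRHS]
  exact mul_right_cancel₀ hpow (hdetEq.trans (mul_comm _ _))
end

section
/- For m > 2 and n > 1, define the mn×mn matrices M^±(m,n) = Σ_{i=1}^n (P(r_i^+) + P(r_i^-)), where P(r_i^±) are the permutation matrices of the flips and flops of S(m,n) acting on the mn symbols {j^k : j ∈ [n], k ∈ C_m}. Then M^±(m,n) = C^±(m,n) + D(m,n), where D(m,n) = diag(0,...,0, 2,...,2, ..., 2(n-1),...,2(n-1)) (each value repeated m times), and C^±(m,n) is the block matrix whose (a,b) block (for 1 ≤ a,b ≤ n) equals the m×m circulant C^±(m) = C(0,1,0,...,0) + C(0,...,0,1) if a + b ≤ n+1 and equals the zero matrix otherwise. -/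
lemma mod_two_cases (a m : ℕ) (h : a < 2 * m) (hm : 0 < m) :
    a % m = if a < m then a else a - m := by
  split_ifs with h1
  · exact Nat.mod_eq_of_lt h1
  · rw [Nat.mod_eq_sub_mod (by omega)]
    exact Nat.mod_eq_of_lt (by omega)

lemma sumA (n c : ℕ) (P : Prop) [Decidable P] :
    ∑ i : Fin n, (if i.val = c ∧ P then (1:ℂ) else 0) = if c < n ∧ P then 1 else 0 := by
  by_cases hP : P
  · simp only [hP, and_true]
    rw [Fin.sum_univ_eq_sum_range (fun x => if x = c then (1:ℂ) else 0)]
    simp [Finset.sum_ite_eq']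
  · simp [hP]

lemma sumB (n j : ℕ) (P : Prop) [Decidable P] (hj : j ≤ n) :
    ∑ i : Fin n, (if i.val < j ∧ P then (1:ℂ) else 0) = if P then (j:ℂ) else 0 := by
  by_cases hP : P
  · simp only [hP, and_true, if_true]
    rw [Fin.sum_univ_eq_sum_range (fun x => if x < j then (1:ℂ) else 0)]
    rw [Finset.sum_boole]
    have : (Finset.range n).filter (fun x => x < j) = Finset.range j := by
      ext x; simp; omega
    rw [this, Finset.card_range]
  · simp [hP]


/-- The i-th flip r_i^+ (prefix of length i+1, 0-indexed) acting on the mn symbols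
j^k: it sends (j,k) with j ≤ i to (i-j, k+1 mod m) and fixes (j,k) with j > i. -/
def flipFun (m n : ℕ) (i : Fin n) : Fin n × Fin m → Fin n × Fin m :=
  fun p =>
    if p.1.val ≤ i.val then
      (⟨i.val - p.1.val, by have := i.isLt; omega⟩,
       ⟨(p.2.val + 1) % m, Nat.mod_lt _ (by have := p.2.isLt; omega)⟩)
    else p

/-- The i-th flop r_i^-: it sends (j,k) with j ≤ i to (i-j, k-1 mod m) and fixes the rest. -/
def flopFun (m n : ℕ) (i : Fin n) : Fin n × Fin m → Fin n × Fin m :=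
  fun p =>
    if p.1.val ≤ i.val then
      (⟨i.val - p.1.val, by have := i.isLt; omega⟩,
       ⟨(p.2.val + (m - 1)) % m, Nat.mod_lt _ (by have := p.2.isLt; omega)⟩)
    else p

/-- The permutation matrix of a map f: the (a,b) entry is 1 iff b = f a. -/
def Pmat {α : Type*} [Fintype α] [DecidableEq α] (f : α → α) : Matrix α α ℂ :=
  Matrix.of fun a b => if b = f a then (1 : ℂ) else 0

/-- The mn×mn diagonal matrix D(m,n) with diagonal entries 2(j-1), each repeated m times
(rows/columns indexed by pairs (j,k) with j ∈ Fin n the symbol and k ∈ Fin m the color). -/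
def Dmat (m n : ℕ) : Matrix (Fin n × Fin m) (Fin n × Fin m) ℂ :=
  Matrix.of fun a b => if a = b then (2 * (a.1.val : ℂ)) else 0

/-- The block matrix C^±(m,n): the (a,b) block (1-indexed blocks a,b with a+b ≤ n+1,
i.e. 0-indexed a.1+b.1+1 ≤ n) is the m×m circulant with first row (0,1,0,…,0,1),
and all other blocks are zero. -/
def CpmBlock (m n : ℕ) : Matrix (Fin n × Fin m) (Fin n × Fin m) ℂ :=
  Matrix.of fun a b =>
    if a.1.val + b.1.val + 1 ≤ n then
      (if (b.2.val + m - a.2.val) % m = 1 % m then (1 : ℂ) else 0) +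
      (if (a.2.val + m - b.2.val) % m = 1 % m then (1 : ℂ) else 0)
    else 0

/-- For m > 2, n > 1, M^±(m,n) = Σ_i (P(r_i^+) + P(r_i^-)) equals C^±(m,n) + D(m,n). -/
theorem stmt_9 (m n : ℕ) (hm : 2 < m) (hn : 1 < n) :
    (∑ i : Fin n, (Pmat (flipFun m n i) + Pmat (flopFun m n i))) =
      CpmBlock m n + Dmat m n := by
  ext a b
  simp only [Matrix.sum_apply, Matrix.add_apply]
  have hkm : a.2.val < m := a.2.isLt
  have hkm' : b.2.val < m := b.2.isLt
  have hjn : a.1.val < n := a.1.isLt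
  have hjn' : b.1.val < n := b.1.isLt
  have key : ∀ i : Fin n,
      Pmat (flipFun m n i) a b + Pmat (flopFun m n i) a b =
      (((if i.val = a.1.val + b.1.val ∧ b.2.val = (a.2.val + 1) % m then (1:ℂ) else 0) +
        (if i.val < a.1.val ∧ a = b then (1:ℂ) else 0)) +
       ((if i.val = a.1.val + b.1.val ∧ b.2.val = (a.2.val + (m-1)) % m then (1:ℂ) else 0) +
        (if i.val < a.1.val ∧ a = b then (1:ℂ) else 0))) := by
    intro i
    unfold Pmat flipFun flopFun
    simp only [Matrix.of_apply]
    by_cases hij : a.1.val ≤ i.val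
    · simp only [hij, if_true, Prod.ext_iff, Fin.ext_iff]
      generalize (a.2.val + 1) % m = c1
      generalize (a.2.val + (m-1)) % m = c2
      split_ifs <;> first | (exfalso; omega) | norm_num
    · simp only [hij, if_false, Prod.ext_iff, Fin.ext_iff]
      generalize (a.2.val + 1) % m = c1
      generalize (a.2.val + (m-1)) % m = c2
      split_ifs <;> first | (exfalso; omega) | norm_num
  rw [Finset.sum_congr rfl (fun i _ => key i)]
  rw [Finset.sum_add_distrib, Finset.sum_add_distrib, Finset.sum_add_distrib]
  rw [sumA, sumA, sumB n a.1.val _ (le_of_lt hjn)]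
  have hC1 : ((b.2.val + m - a.2.val) % m = 1 % m) ↔ b.2.val = (a.2.val + 1) % m := by
    rw [mod_two_cases (b.2.val + m - a.2.val) m (by omega) (by omega),
        mod_two_cases (a.2.val + 1) m (by omega) (by omega),
        Nat.mod_eq_of_lt (show 1 < m by omega)]
    split_ifs <;> omega
  have hC2 : ((a.2.val + m - b.2.val) % m = 1 % m) ↔ b.2.val = (a.2.val + (m-1)) % m := by
    rw [mod_two_cases (a.2.val + m - b.2.val) m (by omega) (by omega),
        mod_two_cases (a.2.val + (m-1)) m (by omega) (by omega),
        Nat.mod_eq_of_lt (show 1 < m by omega)]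
    split_ifs <;> omega
  simp only [CpmBlock, Dmat, Matrix.of_apply, hC1, hC2]
  have hA : (a.1.val + b.1.val < n) ↔ (a.1.val + b.1.val + 1 ≤ n) := by omega
  simp only [hA, ite_and]
  by_cases hAn : a.1.val + b.1.val + 1 ≤ n <;>
    simp only [hAn, if_true, if_false] <;>
      by_cases hab : a = b <;>
        simp only [hab, eq_self_iff_true, if_true, if_false] <;> ring
end

section
/- For m > 2, n > 1, and each integer i with 1 ≤ i < ⌊n/2⌋, the vector v with entries: 0 in the first mi coordinates, −1 in the next m(n−2i) coordinates, n−2i in the next m coordinates, and 0 in the last m(i−1) coordinates, is an eigenvector of M^±(m,n) = C^±(m,n) + D(m,n) with eigenvalue 2(n−i). -/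
lemma mod_one_cases {m x : ℕ} (hm : 1 < m) (hx1 : 1 ≤ x) (hx2 : x < 2*m) :
    x % m = 1 % m ↔ (x = 1 ∨ x = m + 1) := by
  have h1 : 1 % m = 1 := Nat.mod_eq_of_lt hm
  rw [h1]
  constructor
  · intro h
    have hd := Nat.div_add_mod x m
    have hq : x / m < 2 := Nat.div_lt_of_lt_mul (by omega)
    rw [h] at hd
    obtain ⟨q, hq0, hqe⟩ : ∃ q, q < 2 ∧ m * q + 1 = x := ⟨x / m, hq, hd⟩
    interval_cases q <;> omega
  · rintro (rfl | rfl)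
    · exact Nat.mod_eq_of_lt hm
    · rw [Nat.add_mod_left]; exact h1

lemma core (m a b : ℕ) (hm : 1 < m) (ha : a < m) (hb : b < m) :
    ((a + m - b) % m = 1 % m) ↔ (a + m - b = 1 ∨ a + m - b = m + 1) :=
  mod_one_cases hm (by omega) (by omega)

lemma sum_ind1 (m : ℕ) (hm : 2 < m) (k : Fin m) :
    ∑ k' : Fin m, (if (k'.val + m - k.val) % m = 1 % m then (1:ℂ) else 0) = 1 := by
  have hmpos : 0 < m := by omega
  have hw : (k.val + 1) % m < m := Nat.mod_lt _ hmpos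
  have hval : (k.val + 1) % m = if k.val + 1 = m then 0 else k.val + 1 := by
    split_ifs with h
    · rw [h, Nat.mod_self]
    · exact Nat.mod_eq_of_lt (by omega)
  rw [Finset.sum_eq_single (⟨(k.val+1)%m, hw⟩ : Fin m)]
  · rw [if_pos]
    refine (core m _ k.val (by omega) hw k.2).mpr ?_
    rw [hval]; split_ifs with h <;> omega
  · intro k' _ hne
    rw [if_neg]
    intro hc
    have := (core m k'.val k.val (by omega) k'.2 k.2).mp hc
    apply hne
    apply Fin.ext
    show k'.val = (k.val + 1) % m
    rw [hval]; split_ifs <;> omega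
  · intro h; exact absurd (Finset.mem_univ _) h

lemma sum_ind2 (m : ℕ) (hm : 2 < m) (k : Fin m) :
    ∑ k' : Fin m, (if (k.val + m - k'.val) % m = 1 % m then (1:ℂ) else 0) = 1 := by
  have hw : (if k.val = 0 then m-1 else k.val-1) < m := by split_ifs <;> omega
  rw [Finset.sum_eq_single (⟨if k.val = 0 then m-1 else k.val-1, hw⟩ : Fin m)]
  · rw [if_pos]
    refine (core m k.val _ (by omega) k.2 hw).mpr ?_
    split_ifs with h <;> omega
  · intro k' _ hne
    rw [if_neg]
    intro hc
    have := (core m k.val k'.val (by omega) k.2 k'.2).mp hc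
    apply hne
    apply Fin.ext
    show k'.val = if k.val = 0 then m-1 else k.val-1
    split_ifs <;> omega
  · intro h; exact absurd (Finset.mem_univ _) h

noncomputable def wf (n i t : ℕ) : ℂ :=
  if t < i then 0 else if t < n - i then -1 else if t = n - i then (n:ℂ) - 2*i else 0

lemma wfkey (n i j : ℕ) (hi1 : 1 ≤ i) (h2i : 2*i + 2 ≤ n) (hj : j < n) :
    ∑ t ∈ Finset.range n, (if j + t + 1 ≤ n then (2:ℂ) * wf n i t else 0)
      = if j < i then 0 else if j < n - i then -2*((n:ℂ) - j - i) else 0 := by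
  rcases lt_or_ge j i with hji | hji
  · rw [if_pos hji]
    have hsummand : ∀ t ∈ Finset.range n, (if j + t + 1 ≤ n then (2:ℂ) * wf n i t else 0)
        = (if i ≤ t ∧ t < n - i then (-2:ℂ) else 0)
          + (if t = n - i then 2*((n:ℂ) - 2*i) else 0) := by
      intro t ht
      simp only [Finset.mem_range] at ht
      unfold wf
      split_ifs <;> first | omega | ring1
    rw [Finset.sum_congr rfl hsummand, Finset.sum_add_distrib]
    have e1 : ∑ t ∈ Finset.range n, (if i ≤ t ∧ t < n - i then (-2:ℂ) else 0)
        = -2 * ((n - i - i : ℕ) : ℂ) := by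
      rw [← Finset.sum_filter]
      have hf : (Finset.range n).filter (fun t => i ≤ t ∧ t < n - i) = Finset.Ico i (n-i) := by
        ext t; simp only [Finset.mem_filter, Finset.mem_range, Finset.mem_Ico]; omega
      rw [hf, Finset.sum_const, Nat.card_Ico, nsmul_eq_mul]
      ring
    have e2 : ∑ t ∈ Finset.range n, (if t = n - i then 2*((n:ℂ) - 2*i) else 0)
        = 2*((n:ℂ)-2*i) := by
      rw [Finset.sum_ite_eq' (Finset.range n) (n-i), if_pos (by simp only [Finset.mem_range]; omega)]
    rw [e1, e2, Nat.cast_sub (by omega : i ≤ n - i), Nat.cast_sub (by omega : i ≤ n)]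
    ring
  rcases lt_or_ge j (n - i) with hji2 | hji2
  · rw [if_neg (by omega), if_pos hji2]
    have hsummand : ∀ t ∈ Finset.range n, (if j + t + 1 ≤ n then (2:ℂ) * wf n i t else 0)
        = (if i ≤ t ∧ t < n - j then (-2:ℂ) else 0) := by
      intro t ht
      simp only [Finset.mem_range] at ht
      unfold wf
      split_ifs <;> first | omega | ring1
    rw [Finset.sum_congr rfl hsummand, ← Finset.sum_filter]
    have hf : (Finset.range n).filter (fun t => i ≤ t ∧ t < n - j) = Finset.Ico i (n-j) := by
      ext t; simp only [Finset.mem_filter, Finset.mem_range, Finset.mem_Ico]; omega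
    rw [hf, Finset.sum_const, Nat.card_Ico, nsmul_eq_mul,
      Nat.cast_sub (by omega : i ≤ n - j), Nat.cast_sub (by omega : j ≤ n)]
    ring
  · rw [if_neg (by omega), if_neg (by omega)]
    have hsummand : ∀ t ∈ Finset.range n, (if j + t + 1 ≤ n then (2:ℂ) * wf n i t else 0) = 0 := by
      intro t ht
      simp only [Finset.mem_range] at ht
      unfold wf
      split_ifs <;> first | omega | ring1
    rw [Finset.sum_congr rfl hsummand, Finset.sum_const_zero]

/-- For m > 2, n > 1 and 1 ≤ i < ⌊n/2⌋, the vector with entries 0 (first mi coords),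
-1 (next m(n-2i) coords), n-2i (next m coords), 0 (last m(i-1) coords) is an eigenvector
of M^±(m,n) = C^±(m,n) + D(m,n) with eigenvalue 2(n-i). -/
theorem stmt_11 (m n i : ℕ) (hm : 2 < m) (hn : 1 < n) (hi1 : 1 ≤ i) (hi2 : i < n / 2) :
    (CpmBlock m n + Dmat m n).mulVec
        (fun p => if p.1.val < i then (0 : ℂ) else if p.1.val < n - i then -1
          else if p.1.val = n - i then (n : ℂ) - 2 * i else 0) =
      (2 * ((n : ℂ) - i)) • (fun p : Fin n × Fin m =>
        if p.1.val < i then (0 : ℂ) else if p.1.val < n - i then -1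
          else if p.1.val = n - i then (n : ℂ) - 2 * i else 0) ∧
    (fun p : Fin n × Fin m =>
        if p.1.val < i then (0 : ℂ) else if p.1.val < n - i then -1
          else if p.1.val = n - i then (n : ℂ) - 2 * i else 0) ≠ 0 := by
  have h2i : 2 * i + 2 ≤ n := by omega
  have hv : (fun p : Fin n × Fin m =>
      if p.1.val < i then (0 : ℂ) else if p.1.val < n - i then -1
        else if p.1.val = n - i then (n : ℂ) - 2 * i else 0)
      = fun p => wf n i p.1.val := rfl
  rw [hv]
  constructor
  · funext p
    obtain ⟨j, k⟩ := p
    have lhs : (CpmBlock m n + Dmat m n).mulVec (fun p : Fin n × Fin m => wf n i p.1.val) (j, k)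
        = (∑ q : Fin n × Fin m, CpmBlock m n (j, k) q * wf n i q.1.val)
          + (∑ q : Fin n × Fin m, Dmat m n (j, k) q * wf n i q.1.val) := by
      simp only [Matrix.mulVec, dotProduct, Matrix.add_apply, add_mul,
        Finset.sum_add_distrib]
    rw [lhs]
    have hCrow : (∑ q : Fin n × Fin m, CpmBlock m n (j, k) q * wf n i q.1.val)
        = ∑ t ∈ Finset.range n, (if j.val + t + 1 ≤ n then (2:ℂ) * wf n i t else 0) := by
      rw [Fintype.sum_prod_type, ← Fin.sum_univ_eq_sum_range
        (fun t => if j.val + t + 1 ≤ n then (2:ℂ) * wf n i t else 0)]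
      refine Finset.sum_congr rfl fun j' _ => ?_
      by_cases h : j.val + j'.val + 1 ≤ n
      · simp only [CpmBlock, Matrix.of_apply, if_pos h]
        rw [← Finset.sum_mul, Finset.sum_add_distrib, sum_ind1 m hm k, sum_ind2 m hm k]
        norm_num
      · simp only [CpmBlock, Matrix.of_apply, if_neg h, zero_mul, Finset.sum_const_zero]
    have hDrow : (∑ q : Fin n × Fin m, Dmat m n (j, k) q * wf n i q.1.val)
        = 2 * (j.val : ℂ) * wf n i j.val := by
      rw [Finset.sum_eq_single ((j, k) : Fin n × Fin m)]
      · simp [Dmat]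
      · intro b _ hb
        rw [Dmat, Matrix.of_apply, if_neg (fun h => hb h.symm), zero_mul]
      · intro h; exact absurd (Finset.mem_univ _) h
    rw [hCrow, hDrow, wfkey n i j.val hi1 h2i j.2]
    show _ = (2 * ((n : ℂ) - i)) * wf n i j.val
    have hji : j.val < i ∨ (i ≤ j.val ∧ j.val < n - i) ∨ j.val = n - i ∨ n - i < j.val := by omega
    rcases hji with h1 | ⟨h1, h2⟩ | h1 | h1
    · rw [if_pos h1]
      simp only [wf, if_pos h1]
      ring
    · rw [if_neg (by omega), if_pos h2]
      simp only [wf, if_neg (by omega : ¬ j.val < i), if_pos h2]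
      ring
    · rw [if_neg (by omega), if_neg (by omega)]
      simp only [wf, if_neg (by omega : ¬ j.val < i), if_neg (by omega : ¬ j.val < n - i),
        if_pos h1, h1]
      rw [Nat.cast_sub (by omega : i ≤ n)]
      ring
    · rw [if_neg (by omega), if_neg (by omega)]
      simp only [wf, if_neg (by omega : ¬ j.val < i), if_neg (by omega : ¬ j.val < n - i),
        if_neg (by omega : ¬ j.val = n - i)]
      ring
  · intro h
    have h0 := congrFun h ((⟨i, by omega⟩ : Fin n), (⟨0, by omega⟩ : Fin m))
    simp only [wf, Pi.zero_apply] at h0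
    rw [if_neg (by omega : ¬ i < i), if_pos (by omega : i < n - i)] at h0
    exact absurd h0 (by norm_num)
end

section
/- For m > 2 and odd n = 2ℓ+1, for each i with 1 ≤ i ≤ ℓ, the vector with entries: 0 in the first m(ℓ−i) coordinates, −2i in the next m coordinates, 1 in the next 2mi coordinates, and 0 in the last m(ℓ−i) coordinates, is an eigenvector of M^±(m,n) with eigenvalue 2(ℓ−i). -/
lemma cond_iff (m : ℕ) [NeZero m] (x y : Fin m) :
    (x.val + m - y.val) % m = 1 % m ↔ x = y + 1 := by
  have h1 : x.val + m - y.val = (m - y.val) + x.val := by omega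
  rw [h1, show (m - y.val + x.val) % m = (x - y).val from rfl,
    show 1 % m = (1 : Fin m).val from (Fin.val_one' m).symm, Fin.val_eq_val,
    sub_eq_iff_eq_add, add_comm]

lemma sum_ind1_s14 (m : ℕ) [NeZero m] (y : Fin m) :
    ∑ x : Fin m, (if (x.val + m - y.val) % m = 1 % m then (1:ℂ) else 0) = 1 := by
  simp only [cond_iff]
  simp

lemma sum_ind2_s14 (m : ℕ) [NeZero m] (y : Fin m) :
    ∑ x : Fin m, (if (y.val + m - x.val) % m = 1 % m then (1:ℂ) else 0) = 1 := by
  have : ∀ x : Fin m, ((y.val + m - x.val) % m = 1 % m ↔ x = y - 1) := by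
    intro x
    rw [cond_iff]
    exact ⟨fun h => by simp [h], fun h => by simp [h]⟩
  simp only [this]
  simp

/-- the profile function -/
noncomputable def wfun (l i : ℕ) : ℕ → ℂ := fun b =>
  if b < l - i then 0 else if b = l - i then -2 * i else if b ≤ l + i then 1 else 0

lemma wsum (l i : ℕ) (hi1 : 1 ≤ i) (hi2 : i ≤ l) (T : ℕ) :
    ∑ b ∈ Finset.range T, wfun l i b =
      if T ≤ l - i then 0
      else if T ≤ l + i + 1 then (T : ℂ) - 1 - (l : ℂ) - (i : ℂ) else 0 := by
  induction T with
  | zero => simp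
  | succ T ih =>
    rw [Finset.sum_range_succ, ih, wfun]
    have hli : ((l - i : ℕ) : ℂ) = (l : ℂ) - (i : ℂ) := by
      push_cast [Nat.cast_sub hi2]; ring
    split_ifs with h1 h2 h3 h4 h5 h6 h7 h8 h9 h10 h11 h12 h13 h14 <;>
      try omega
    all_goals try (push_cast; ring)
    · rw [h5, hli]; ring
    · have hT : T = l + i + 1 := by omega
      subst hT; push_cast; ring

lemma Crow (m l i : ℕ) [NeZero m] (a : Fin (2*l+1)) (k : Fin m) :
    (CpmBlock m (2*l+1)).mulVec (fun p => wfun l i p.1.val) (a, k) =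
      ∑ b ∈ Finset.range (2*l - a.val + 1), 2 * wfun l i b := by
  rw [Matrix.mulVec, dotProduct, Fintype.sum_prod_type]
  have step1 : ∀ b1 : Fin (2*l+1),
      ∑ b2 : Fin m, CpmBlock m (2*l+1) (a, k) (b1, b2) * wfun l i b1.val =
      (if a.val + b1.val + 1 ≤ 2*l+1 then 2 * wfun l i b1.val else 0) := by
    intro b1
    by_cases hab : a.val + b1.val + 1 ≤ 2*l+1
    · simp only [CpmBlock, Matrix.of_apply, hab, if_true]
      rw [← Finset.sum_mul, Finset.sum_add_distrib, sum_ind1_s14, sum_ind2_s14]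
      norm_num
    · simp only [CpmBlock, Matrix.of_apply, if_neg hab, zero_mul, Finset.sum_const_zero]
  rw [Finset.sum_congr rfl (fun b1 _ => step1 b1)]
  rw [Fin.sum_univ_eq_sum_range (fun b => if a.val + b + 1 ≤ 2*l+1 then 2 * wfun l i b else 0)]
  rw [← Finset.sum_subset (Finset.range_subset_range.mpr (by omega : 2*l - a.val + 1 ≤ 2*l+1))
    (fun b hb hb' => by
      rw [if_neg]
      simp only [Finset.mem_range] at hb hb'
      omega)]
  refine Finset.sum_congr rfl fun b hb => ?_
  simp only [Finset.mem_range] at hb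
  rw [if_pos (by omega)]

lemma Drow (m l i : ℕ) [NeZero m] (a : Fin (2*l+1)) (k : Fin m) :
    (Dmat m (2*l+1)).mulVec (fun p => wfun l i p.1.val) (a, k) =
      2 * (a.val : ℂ) * wfun l i a.val := by
  rw [Matrix.mulVec, dotProduct]
  simp only [Dmat, Matrix.of_apply, ite_mul, zero_mul]
  rw [Finset.sum_ite_eq Finset.univ (a, k) (fun b => 2 * (a.val : ℂ) * wfun l i b.1.val)]
  simp

/-- For m > 2 and odd n = 2ℓ+1, 1 ≤ i ≤ ℓ: the vector with entries 0 (first m(ℓ-i) coords),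
-2i (next m coords), 1 (next 2mi coords), 0 (last m(ℓ-i) coords) is an eigenvector of
M^±(m,n) with eigenvalue 2(ℓ-i). -/
theorem stmt_14 (m l i : ℕ) (hm : 2 < m) (hi1 : 1 ≤ i) (hi2 : i ≤ l) :
    (CpmBlock m (2 * l + 1) + Dmat m (2 * l + 1)).mulVec
        (fun p => if p.1.val < l - i then (0 : ℂ) else if p.1.val = l - i then -2 * i
          else if p.1.val ≤ l + i then 1 else 0) =
      (2 * ((l : ℂ) - i)) • (fun p : Fin (2 * l + 1) × Fin m =>
        if p.1.val < l - i then (0 : ℂ) else if p.1.val = l - i then -2 * i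
          else if p.1.val ≤ l + i then 1 else 0) ∧
    (fun p : Fin (2 * l + 1) × Fin m =>
        if p.1.val < l - i then (0 : ℂ) else if p.1.val = l - i then -2 * i
          else if p.1.val ≤ l + i then 1 else 0) ≠ 0 := by
  haveI : NeZero m := ⟨by omega⟩
  have hv : (fun p : Fin (2 * l + 1) × Fin m =>
      if p.1.val < l - i then (0 : ℂ) else if p.1.val = l - i then -2 * i
        else if p.1.val ≤ l + i then 1 else 0) = fun p => wfun l i p.1.val := rfl
  rw [hv]
  constructor
  · funext p
    obtain ⟨a, k⟩ := p
    rw [Matrix.add_mulVec, Pi.add_apply, Crow m l i a k, Drow m l i a k,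
      Pi.smul_apply, smul_eq_mul, ← Finset.mul_sum, wsum l i hi1 hi2]
    have ha : a.val ≤ 2 * l := by omega
    have hli : ((l - i : ℕ) : ℂ) = (l : ℂ) - (i : ℂ) := by
      push_cast [Nat.cast_sub hi2]; ring
    have hcast : ((2*l - a.val + 1 : ℕ) : ℂ) = 2*(l:ℂ) - (a.val:ℂ) + 1 := by
      push_cast [Nat.cast_sub ha]; ring
    rw [wfun]
    split_ifs with h1 h2 h3 h4 h5 h6 h7 h8 <;> try omega
    · ring
    · rw [hcast, h7, hli]; ring
    · rw [hcast]; ring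
    · ring
  · intro h
    have := congrFun h (⟨l - i, by omega⟩, ⟨0, by omega⟩)
    simp only [wfun, Pi.zero_apply, lt_irrefl, if_false, if_true, eq_self_iff_true] at this
    have h2 : i = 0 := by
      have h3 : (i : ℂ) = 0 := by linear_combination (-1/2 : ℂ) * this
      exact_mod_cast h3
    omega
end

section
/- If m ≡ 0 (mod 4) and n > 1, then every even integer in [0, 2n] is an eigenvalue of M^±(m,n); in particular, for each i ∈ {0, 1, ..., n−1}, det(2i · I_{mn} − M^±(m,n)) = 0. -/
theorem aux_iff1 (a b m : ℕ) (hm : 4 ≤ m) (h : a < m) (hb : b < m) :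
    (b + m - a) % m = 1 % m ↔ b = (a+1) % m := by
  have h5 : 1 % m = 1 := Nat.mod_eq_of_lt (by omega)
  have hx : ((b + m - a) % m = b + m - a ∧ b < a) ∨ ((b + m - a) % m = b - a ∧ a ≤ b) := by
    rcases lt_or_ge b a with h' | h'
    · exact Or.inl ⟨Nat.mod_eq_of_lt (by omega), h'⟩
    · refine Or.inr ⟨?_, h'⟩
      have e : b + m - a = (b - a) + m := by omega
      rw [e, Nat.add_mod_right, Nat.mod_eq_of_lt (by omega)]
  have hy : ((a+1) % m = 0 ∧ a + 1 = m) ∨ ((a+1) % m = a+1 ∧ a + 1 < m) := by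
    rcases eq_or_ne (a+1) m with h' | h'
    · exact Or.inl ⟨by rw [h', Nat.mod_self], h'⟩
    · exact Or.inr ⟨Nat.mod_eq_of_lt (by omega), by omega⟩
  omega

theorem aux_iff2 (a b m : ℕ) (hm : 4 ≤ m) (h : a < m) (hb : b < m) :
    (a + m - b) % m = 1 % m ↔ b = (a+m-1) % m := by
  have h5 : 1 % m = 1 := Nat.mod_eq_of_lt (by omega)
  have hx : ((a + m - b) % m = a + m - b ∧ a < b) ∨ ((a + m - b) % m = a - b ∧ b ≤ a) := by
    rcases lt_or_ge a b with h' | h'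
    · exact Or.inl ⟨Nat.mod_eq_of_lt (by omega), h'⟩
    · refine Or.inr ⟨?_, h'⟩
      have e : a + m - b = (a - b) + m := by omega
      rw [e, Nat.add_mod_right, Nat.mod_eq_of_lt (by omega)]
  have hy : ((a+m-1) % m = m-1 ∧ a = 0) ∨ ((a+m-1) % m = a-1 ∧ 1 ≤ a) := by
    rcases eq_or_ne a 0 with h' | h'
    · subst h'
      refine Or.inl ⟨?_, rfl⟩
      have e : 0 + m - 1 = m - 1 := by omega
      rw [e, Nat.mod_eq_of_lt (by omega)]
    · refine Or.inr ⟨?_, by omega⟩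
      have e : a + m - 1 = (a - 1) + m := by omega
      rw [e, Nat.add_mod_right, Nat.mod_eq_of_lt (by omega)]
  omega

theorem aux_Ipow_mod (x : ℕ) : Complex.I ^ x = Complex.I ^ (x % 4) := by
  conv_lhs => rw [← Nat.div_add_mod x 4]
  rw [pow_add, pow_mul, Complex.I_pow_four, one_pow, one_mul]

theorem aux_key_zero (m a : ℕ) (hm : 4 ≤ m) (h4 : m % 4 = 0) (ha : a < m) :
    Complex.I ^ ((a+1) % m) + Complex.I ^ ((a+m-1) % m) = 0 := by
  have hd : (4:ℕ) ∣ m := Nat.dvd_of_mod_eq_zero h4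
  rw [aux_Ipow_mod ((a+1) % m), aux_Ipow_mod ((a+m-1) % m),
    Nat.mod_mod_of_dvd _ hd, Nat.mod_mod_of_dvd _ hd]
  obtain ⟨r, hr4, hrr⟩ : ∃ r, r < 4 ∧ (a+1) % 4 = r := ⟨_, Nat.mod_lt _ (by norm_num), rfl⟩
  rw [hrr, show (a+m-1) % 4 = (r+2) % 4 by omega]
  interval_cases r <;> norm_num [pow_succ, Complex.I_mul_I]

theorem aux_sumA (m : ℕ) (hm : 4 ≤ m) (a : Fin m) (f : Fin m → ℂ) :
    ∑ b : Fin m, (if ((b:ℕ) + m - (a:ℕ)) % m = 1 % m then (1:ℂ) else 0) * f b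
      = f ⟨((a:ℕ)+1) % m, Nat.mod_lt _ (by omega)⟩ := by
  set c : Fin m := ⟨((a:ℕ)+1) % m, Nat.mod_lt _ (by omega)⟩ with hc
  have h : ∀ b : Fin m, (((b:ℕ) + m - (a:ℕ)) % m = 1 % m) ↔ (b = c) := by
    intro b
    rw [aux_iff1 (a:ℕ) (b:ℕ) m hm a.isLt b.isLt]
    exact ⟨fun hh => Fin.ext hh, fun hh => by rw [hh]⟩
  simp_rw [h, ite_mul, one_mul, zero_mul]
  rw [Finset.sum_ite_eq' Finset.univ c f, if_pos (Finset.mem_univ c)]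

theorem aux_sumB (m : ℕ) (hm : 4 ≤ m) (a : Fin m) (f : Fin m → ℂ) :
    ∑ b : Fin m, (if ((a:ℕ) + m - (b:ℕ)) % m = 1 % m then (1:ℂ) else 0) * f b
      = f ⟨((a:ℕ)+m-1) % m, Nat.mod_lt _ (by omega)⟩ := by
  set c : Fin m := ⟨((a:ℕ)+m-1) % m, Nat.mod_lt _ (by omega)⟩ with hc
  have h : ∀ b : Fin m, (((a:ℕ) + m - (b:ℕ)) % m = 1 % m) ↔ (b = c) := by
    intro b
    rw [aux_iff2 (a:ℕ) (b:ℕ) m hm a.isLt b.isLt]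
    exact ⟨fun hh => Fin.ext hh, fun hh => by rw [hh]⟩
  simp_rw [h, ite_mul, one_mul, zero_mul]
  rw [Finset.sum_ite_eq' Finset.univ c f, if_pos (Finset.mem_univ c)]

theorem aux_Dmat_mulVec (m n : ℕ) (v : Fin n × Fin m → ℂ) :
    (Dmat m n).mulVec v = fun a => 2 * ((a.1:ℕ) : ℂ) * v a := by
  funext a
  simp [Dmat, Matrix.mulVec, dotProduct, ite_mul, mul_assoc]

theorem aux_Cpm_ker (m n k : ℕ) (hm : 4 ≤ m) (h4 : m % 4 = 0) (hk : k < n) :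
    (CpmBlock m n).mulVec
      (fun p => if p.1 = (⟨k, hk⟩ : Fin n) then Complex.I ^ (p.2:ℕ) else 0) = 0 := by
  funext a
  obtain ⟨a1, a2⟩ := a
  show ∑ b : Fin n × Fin m, CpmBlock m n (a1, a2) b *
      (if b.1 = (⟨k, hk⟩ : Fin n) then Complex.I ^ (b.2:ℕ) else 0) = 0
  rw [Fintype.sum_prod_type]
  apply Finset.sum_eq_zero
  intro b1 _
  by_cases hb : b1 = (⟨k, hk⟩ : Fin n)
  · simp only [hb, if_pos rfl]
    by_cases hcond : (a1:ℕ) + k + 1 ≤ n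
    · simp only [CpmBlock, Matrix.of_apply, eq_self_iff_true, if_true]
      simp only [if_pos hcond]
      simp_rw [add_mul]
      rw [Finset.sum_add_distrib,
        aux_sumA m hm a2 (fun y => Complex.I ^ (y:ℕ)),
        aux_sumB m hm a2 (fun y => Complex.I ^ (y:ℕ))]
      exact aux_key_zero m (a2:ℕ) hm h4 a2.isLt
    · apply Finset.sum_eq_zero
      intro y _
      simp [CpmBlock, hcond]
      intro h
      exact absurd h (by omega)
  · apply Finset.sum_eq_zero
    intro y _
    simp [hb]

theorem aux_Cpm_ones (m n : ℕ) (hm : 4 ≤ m) :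
    (CpmBlock m n).mulVec (fun _ => 1) = fun a => ((2 * (n - (a.1:ℕ)) : ℕ) : ℂ) := by
  funext a
  obtain ⟨a1, a2⟩ := a
  show ∑ b : Fin n × Fin m, CpmBlock m n (a1, a2) b * 1 = _
  rw [Fintype.sum_prod_type]
  have inner : ∀ b1 : Fin n, ∑ y : Fin m, CpmBlock m n (a1, a2) (b1, y) * 1
      = if (a1:ℕ) + (b1:ℕ) + 1 ≤ n then (2:ℂ) else 0 := by
    intro b1
    by_cases hcond : (a1:ℕ) + (b1:ℕ) + 1 ≤ n
    · simp only [CpmBlock, Matrix.of_apply, if_pos hcond]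
      simp_rw [add_mul]
      rw [Finset.sum_add_distrib,
        aux_sumA m hm a2 (fun _ => (1:ℂ)),
        aux_sumB m hm a2 (fun _ => (1:ℂ))]
      norm_num
    · rw [if_neg hcond]
      apply Finset.sum_eq_zero
      intro y _
      simp [CpmBlock, hcond]
      intro h
      exact absurd h (by omega)
  rw [Finset.sum_congr rfl (fun b1 _ => inner b1)]
  rw [Fin.sum_univ_eq_sum_range (fun j => if (a1:ℕ) + j + 1 ≤ n then (2:ℂ) else 0) n]
  have hmem : ∀ j, ((a1:ℕ) + j + 1 ≤ n) ↔ j ∈ Finset.range (n - (a1:ℕ)) := by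
    intro j; simp only [Finset.mem_range]; omega
  simp_rw [hmem]
  rw [Finset.sum_ite_mem]
  have : Finset.range n ∩ Finset.range (n - (a1:ℕ)) = Finset.range (n - (a1:ℕ)) := by
    ext j; simp only [Finset.mem_inter, Finset.mem_range]; omega
  rw [this, Finset.sum_const, Finset.card_range]
  push_cast
  rw [nsmul_eq_mul]
  push_cast
  ring

/-- If m ≡ 0 (mod 4) (m positive) and n > 1, every even integer in [0,2n] is an eigenvalue
of M^±(m,n); in particular det(2i·I - M^±(m,n)) = 0 for each i ∈ {0,…,n-1}. -/
theorem stmt_16 (m n : ℕ) (hm : 0 < m) (h4 : m % 4 = 0) (hn : 1 < n) :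
    (∀ k : ℕ, k ≤ n →
      ∃ v : Fin n × Fin m → ℂ, v ≠ 0 ∧
        (CpmBlock m n + Dmat m n).mulVec v = ((2 * k : ℕ) : ℂ) • v) ∧
    (∀ i : ℕ, i < n →
      (((2 * i : ℕ) : ℂ) • (1 : Matrix (Fin n × Fin m) (Fin n × Fin m) ℂ) -
        (CpmBlock m n + Dmat m n)).det = 0) := by
  have hm4 : 4 ≤ m := by omega
  have main : ∀ k : ℕ, (hk : k < n) →
      (CpmBlock m n + Dmat m n).mulVec
        (fun p => if p.1 = (⟨k, hk⟩ : Fin n) then Complex.I ^ (p.2:ℕ) else 0)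
      = ((2 * k : ℕ) : ℂ) •
        (fun p => if p.1 = (⟨k, hk⟩ : Fin n) then Complex.I ^ (p.2:ℕ) else 0) := by
    intro k hk
    rw [Matrix.add_mulVec, aux_Cpm_ker m n k hm4 h4 hk, aux_Dmat_mulVec]
    funext a
    simp only [Pi.add_apply, Pi.zero_apply, zero_add, Pi.smul_apply, smul_eq_mul]
    by_cases h : a.1 = (⟨k, hk⟩ : Fin n)
    · simp only [h, if_pos]
      push_cast
      ring
    · simp [h]
  have nonzero : ∀ k : ℕ, (hk : k < n) →
      (fun (p : Fin n × Fin m) => if p.1 = (⟨k, hk⟩ : Fin n) then Complex.I ^ (p.2:ℕ) else 0)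
        ≠ 0 := by
    intro k hk h
    have := congrFun h ((⟨k, hk⟩ : Fin n), (⟨0, by omega⟩ : Fin m))
    simp at this
  constructor
  · intro k hk
    rcases hk.lt_or_eq with hk' | hk''
    · exact ⟨_, nonzero k hk', main k hk'⟩
    · rw [hk'']
      refine ⟨fun _ => 1, ?_, ?_⟩
      · intro h
        have := congrFun h ((⟨0, by omega⟩ : Fin n), (⟨0, by omega⟩ : Fin m))
        simp at this
      · rw [Matrix.add_mulVec, aux_Cpm_ones m n hm4, aux_Dmat_mulVec]
        funext a
        have ha : (a.1:ℕ) ≤ n := le_of_lt a.1.isLt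
        simp only [Pi.add_apply, Pi.smul_apply, smul_eq_mul, mul_one]
        have : ((n - (a.1:ℕ) : ℕ) : ℂ) = (n:ℂ) - ((a.1:ℕ) : ℂ) := by
          push_cast [Nat.cast_sub ha]; ring
        push_cast [this]
        ring
  · intro i hi
    rw [← Matrix.exists_mulVec_eq_zero_iff]
    refine ⟨_, nonzero i hi, ?_⟩
    rw [Matrix.sub_mulVec, Matrix.smul_mulVec, Matrix.one_mulVec, main i hi]
    simp
end

section
/- For m > 2 and n > 1, every integer in the set [0, n] \ {⌊n/2⌋} is an eigenvalue of the matrix M^+(m,n) = C^+(m,n) + (1/2)D(m,n). -/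
/-- Half of D(m,n): the mn×mn diagonal matrix with diagonal entries j-1, each repeated
m times, for j = 1,…,n. -/
def DhalfMat (m n : ℕ) : Matrix (Fin n × Fin m) (Fin n × Fin m) ℂ :=
  Matrix.of fun a b => if a = b then ((a.1.val : ℂ)) else 0

/-- The block matrix C^+(m,n): the (a,b) block (1-indexed blocks a,b with a+b ≤ n+1,
i.e. 0-indexed a.1+b.1+1 ≤ n) is the m×m cyclic shift matrix (circulant with first
row (0,1,0,…,0)), and all other blocks are zero. -/
def CplusBlock (m n : ℕ) : Matrix (Fin n × Fin m) (Fin n × Fin m) ℂ :=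
  Matrix.of fun a b =>
    if a.1.val + b.1.val + 1 ≤ n then
      (if (b.2.val + m - a.2.val) % m = 1 % m then (1 : ℂ) else 0)
    else 0

def wv (n k a : ℕ) : ℂ :=
  if 2*k < n then
    (if a = k then 2*(k:ℂ) + 1 - n else if k < a ∧ a + k + 1 ≤ n then 1 else 0)
  else
    (if a = k then (n:ℂ) - 2*k else if n ≤ a + k ∧ a < k then 1 else 0)

lemma sum_wv (n k : ℕ) (hk : k ≤ n) (hne : k ≠ n/2) :
    ∀ r, r ≤ n → ∑ b ∈ Finset.range r, wv n k b =
      if (k < r ∨ n < r + k) ∧ (r ≤ k ∨ r + k ≤ n) then (r:ℂ) + k - n else 0 := by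
  intro r
  induction r with
  | zero => intro _; rw [Finset.range_zero, Finset.sum_empty, if_neg (by omega)]
  | succ r ih =>
      intro h
      rw [Finset.sum_range_succ, ih (by omega)]
      unfold wv
      split_ifs
      all_goals try (exfalso; omega)
      all_goals try push_cast
      all_goals try ring1
      all_goals have hb : r = k ∨ r + k = n := by omega
      all_goals rcases hb with hb | hb
      all_goals try (exfalso; omega)
      all_goals
        first
          | (replace hb : (r:ℂ) = k := by exact_mod_cast hb
             first | linear_combination hb | linear_combination -hb)
          | (replace hb : (r:ℂ) + k = n := by exact_mod_cast hb
             first | linear_combination hb | linear_combination -hb)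

lemma modkey (m s t : ℕ) (hm : 1 < m) (hs : s < m) (ht : t < m) :
    ((t + m - s) % m = 1 % m) ↔ t = (s + 1) % m := by
  have h1m : 1 % m = 1 := Nat.mod_eq_of_lt hm
  rw [h1m]
  have hsm : (s + 1) % m = if s + 1 = m then 0 else s + 1 := by
    split_ifs with h
    · simp [h]
    · exact Nat.mod_eq_of_lt (by omega)
  have hx2 : (t + m - s) % m = if t + m - s < m then t + m - s else t + m - s - m := by
    split_ifs with h
    · exact Nat.mod_eq_of_lt h
    · rw [Nat.mod_eq_sub_mod (by omega), Nat.mod_eq_of_lt (by omega)]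
  rw [hx2, hsm]
  split_ifs <;> omega

lemma innerSumShift (m : ℕ) (hm : 2 < m) (s : Fin m) (c : ℂ) :
    ∑ t : Fin m, (if ((t:ℕ) + m - (s:ℕ)) % m = 1 % m then (1:ℂ) else 0) * c = c := by
  have hm1 : 1 < m := by omega
  have hlt : (s.val + 1) % m < m := Nat.mod_lt _ (by omega)
  set t0 : Fin m := ⟨(s.val + 1) % m, hlt⟩ with ht0
  have key : ∀ t : Fin m, (((t:ℕ) + m - (s:ℕ)) % m = 1 % m) ↔ t = t0 := by
    intro t
    rw [Fin.ext_iff]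
    exact modkey m s t hm1 s.isLt t.isLt
  calc ∑ t : Fin m, (if ((t:ℕ) + m - (s:ℕ)) % m = 1 % m then (1:ℂ) else 0) * c
      = ∑ t : Fin m, (if t = t0 then c else 0) := by
        refine Finset.sum_congr rfl fun t _ => ?_
        rw [if_congr (key t) rfl rfl, ite_mul, one_mul, zero_mul]
    _ = c := by simp


/-- For m > 2 and n > 1, every integer k with 0 ≤ k ≤ n and k ≠ ⌊n/2⌋ is an eigenvalue of
M^+(m,n) = C^+(m,n) + (1/2)D(m,n). -/
theorem stmt_17 (m n : ℕ) (hm : 2 < m) (hn : 1 < n) :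
    ∀ k : ℕ, k ≤ n → k ≠ n / 2 →
      ∃ v : Fin n × Fin m → ℂ, v ≠ 0 ∧
        (CplusBlock m n + DhalfMat m n).mulVec v = (k : ℂ) • v := by
  intro k hk hne
  refine ⟨fun p => wv n k p.1.val, ?_, ?_⟩
  · -- nonzero
    intro h0
    by_cases hc : 2*k < n
    · have hv := congrFun h0 (⟨k, by omega⟩, ⟨0, by omega⟩)
      simp only [wv, Pi.zero_apply, if_pos hc, eq_self_iff_true, if_true] at hv
      have h2 : ((2*k+1 : ℕ) : ℂ) = ((n:ℕ) : ℂ) := by push_cast; linear_combination hv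
      have := Nat.cast_inj.mp h2
      omega
    · by_cases hkn : k < n
      · have hv := congrFun h0 (⟨k, hkn⟩, ⟨0, by omega⟩)
        simp only [wv, Pi.zero_apply, if_neg hc, eq_self_iff_true, if_true] at hv
        have h2 : ((n : ℕ) : ℂ) = ((2*k : ℕ) : ℂ) := by push_cast; linear_combination hv
        have := Nat.cast_inj.mp h2
        omega
      · have hv := congrFun h0 (⟨0, by omega⟩, ⟨0, by omega⟩)
        have hkn' : k = n := by omega
        simp only [wv, Pi.zero_apply, if_neg hc] at hv
        rw [if_neg (by omega), if_pos (by omega)] at hv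
        exact one_ne_zero hv
  · -- eigen equation
    funext p
    obtain ⟨a, s⟩ := p
    have ha : (a:ℕ) < n := a.isLt
    have expand : (CplusBlock m n + DhalfMat m n).mulVec (fun p => wv n k p.1.val) (a,s)
        = (∑ q : Fin n × Fin m, CplusBlock m n (a,s) q * wv n k q.1.val)
          + (∑ q : Fin n × Fin m, DhalfMat m n (a,s) q * wv n k q.1.val) := by
      simp [Matrix.mulVec, dotProduct, Matrix.add_apply, add_mul,
        Finset.sum_add_distrib]
    have dpart : (∑ q : Fin n × Fin m, DhalfMat m n (a,s) q * wv n k q.1.val)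
        = ((a:ℕ):ℂ) * wv n k a.val := by
      rw [Finset.sum_eq_single (a,s)]
      · simp [DhalfMat]
      · intro q _ hq
        simp only [DhalfMat, Matrix.of_apply]
        rw [if_neg (fun h => hq h.symm), zero_mul]
      · simp
    have cpart : (∑ q : Fin n × Fin m, CplusBlock m n (a,s) q * wv n k q.1.val)
        = ∑ b ∈ Finset.range (n - a.val), wv n k b := by
      rw [Fintype.sum_prod_type]
      have inner : ∀ b : Fin n,
          (∑ t : Fin m, CplusBlock m n (a,s) (b,t) * wv n k b)
          = (if (a:ℕ) + (b:ℕ) + 1 ≤ n then wv n k b else 0) := by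
        intro b
        simp only [CplusBlock, Matrix.of_apply]
        split_ifs with hcond
        · exact innerSumShift m hm s (wv n k b)
        · simp
      rw [Finset.sum_congr rfl fun b _ => inner b]
      rw [Fin.sum_univ_eq_sum_range (fun b => if (a:ℕ) + b + 1 ≤ n then wv n k b else 0) n]
      rw [← Finset.sum_filter]
      congr 1
      ext b
      simp only [Finset.mem_filter, Finset.mem_range]
      omega
    rw [expand, dpart, cpart, sum_wv n k hk hne (n - a.val) (by omega)]
    show _ = (k:ℂ) • wv n k a.val
    rw [smul_eq_mul]
    by_cases hak : (a:ℕ) = k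
    · rw [hak]
      unfold wv
      split_ifs
      all_goals try (exfalso; omega)
      all_goals try push_cast [Nat.cast_sub hk]
      all_goals ring1
    · unfold wv
      split_ifs
      all_goals try (exfalso; omega)
      all_goals try push_cast [Nat.cast_sub ha.le]
      all_goals ring1
end

section
/- For m > 2 and odd n = 2ℓ+1, for each i with 1 ≤ i ≤ ℓ, the vector with entries: 0 in the first m(ℓ−i) coordinates, −2i in the next m coordinates, 1 in the next 2mi coordinates, and 0 in the last m(ℓ−i) coordinates, is an eigenvector of M^+(m,n) = C^+(m,n) + (1/2)D(m,n) with eigenvalue ℓ−i. -/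
lemma shift_sum (m : ℕ) (hm : 2 < m) (r : Fin m) :
    ∑ s : Fin m, (if (s.val + m - r.val) % m = 1 % m then (1:ℂ) else 0) = 1 := by
  have hr := r.isLt
  have h1 : 1 % m = 1 := Nat.mod_eq_of_lt (by omega)
  have hs0 : (r.val + 1) % m < m := Nat.mod_lt _ (by omega)
  set s0 : Fin m := ⟨(r.val + 1) % m, hs0⟩ with hs0def
  have key : ∀ s : Fin m, ((s.val + m - r.val) % m = 1 % m) ↔ s = s0 := by
    intro s
    have hs := s.isLt
    rw [Fin.ext_iff, h1]
    show _ ↔ s.val = (r.val + 1) % m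
    by_cases hx : s.val + m - r.val < m
    · rw [Nat.mod_eq_of_lt hx]
      by_cases hrr : r.val + 1 < m
      · rw [Nat.mod_eq_of_lt hrr]; omega
      · have hm' : r.val + 1 = m := by omega
        have : (r.val + 1) % m = 0 := by rw [hm', Nat.mod_self]
        rw [this]; omega
    · have hx2 : s.val + m - r.val - m < m := by omega
      have hmod : (s.val + m - r.val) % m = s.val + m - r.val - m := by
        rw [Nat.mod_eq_sub_mod (by omega), Nat.mod_eq_of_lt hx2]
      rw [hmod]
      by_cases hrr : r.val + 1 < m
      · rw [Nat.mod_eq_of_lt hrr]; omega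
      · have hm' : r.val + 1 = m := by omega
        have : (r.val + 1) % m = 0 := by rw [hm', Nat.mod_self]
        rw [this]; omega
  calc ∑ s : Fin m, (if (s.val + m - r.val) % m = 1 % m then (1:ℂ) else 0)
      = ∑ s : Fin m, (if s = s0 then (1:ℂ) else 0) := by
        apply Finset.sum_congr rfl
        intro s _
        simp only [key s]
    _ = 1 := by simp

lemma dhalf_apply (m n : ℕ) (v : Fin n × Fin m → ℂ) (p : Fin n × Fin m) :
    (DhalfMat m n).mulVec v p = (p.1.val : ℂ) * v p := by
  classical
  unfold DhalfMat Matrix.mulVec dotProduct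
  simp only [Matrix.of_apply, ite_mul, zero_mul]
  rw [Finset.sum_ite_eq Finset.univ p (fun q => (p.1.val : ℂ) * v q)]
  simp

lemma cplus_apply (m n : ℕ) (hm : 2 < m) (v : Fin n × Fin m → ℂ) (f : Fin n → ℂ)
    (hv : ∀ q, v q = f q.1) (p : Fin n × Fin m) :
    (CplusBlock m n).mulVec v p
      = ∑ b : Fin n, (if p.1.val + b.val + 1 ≤ n then f b else 0) := by
  unfold CplusBlock Matrix.mulVec dotProduct
  simp only [Matrix.of_apply]
  rw [Fintype.sum_prod_type]
  apply Finset.sum_congr rfl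
  intro b _
  by_cases h : p.1.val + b.val + 1 ≤ n
  · simp only [if_pos h, hv]
    rw [← Finset.sum_mul, shift_sum m hm p.2, one_mul]
  · simp [if_neg h, show ¬ (p.1.val + b.val < n) by omega]

lemma sum_range_ite (N M : ℕ) (h : M ≤ N) (f : ℕ → ℂ) :
    ∑ k ∈ Finset.range N, (if k < M then f k else 0) = ∑ k ∈ Finset.range M, f k := by
  rw [← Finset.sum_subset (Finset.range_subset_range.2 h)]
  · apply Finset.sum_congr rfl
    intro k hk
    simp [Finset.mem_range.1 hk]
  · intro k _ hk
    simp only [Finset.mem_range] at hk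
    simp only [Finset.mem_range] at *
    rw [if_neg (by omega)]

lemma Tval (i j : ℕ) (hi : 1 ≤ i) (M : ℕ) :
    ∑ k ∈ Finset.range M,
        (if k < j then (0:ℂ) else if k = j then -2*(i:ℂ) else if k ≤ i + j + i then 1 else 0)
      = if M ≤ j then 0 else if M ≤ i + j + i + 1 then (M:ℂ) - 1 - j - 2*i else 0 := by
  induction M with
  | zero => simp
  | succ M ih =>
    rw [Finset.sum_range_succ, ih]
    by_cases hMj : M = j
    · subst hMj
      split_ifs <;> first | (exfalso; omega) | (push_cast; ring)
    · by_cases hM2 : M = i + j + i + 1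
      · subst hM2
        split_ifs <;> first | (exfalso; omega) | (push_cast; ring)
      · split_ifs <;> first | (exfalso; omega) | (push_cast; ring)

/-- For m > 2 and odd n = 2ℓ+1, 1 ≤ i ≤ ℓ: the vector with entries 0 (first m(ℓ-i) coords),
-2i (next m coords), 1 (next 2mi coords), 0 (last m(ℓ-i) coords) is an eigenvector of
M^+(m,n) = C^+(m,n) + (1/2)D(m,n) with eigenvalue ℓ-i. -/
theorem stmt_18 (m l i : ℕ) (hm : 2 < m) (hi1 : 1 ≤ i) (hi2 : i ≤ l) :
    (CplusBlock m (2 * l + 1) + DhalfMat m (2 * l + 1)).mulVec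
        (fun p => if p.1.val < l - i then (0 : ℂ) else if p.1.val = l - i then -2 * i
          else if p.1.val ≤ l + i then 1 else 0) =
      ((l : ℂ) - i) • (fun p : Fin (2 * l + 1) × Fin m =>
        if p.1.val < l - i then (0 : ℂ) else if p.1.val = l - i then -2 * i
          else if p.1.val ≤ l + i then 1 else 0) ∧
    (fun p : Fin (2 * l + 1) × Fin m =>
        if p.1.val < l - i then (0 : ℂ) else if p.1.val = l - i then -2 * i
          else if p.1.val ≤ l + i then 1 else 0) ≠ 0 := by
  obtain ⟨j, rfl⟩ : ∃ j, l = i + j := ⟨l - i, by omega⟩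
  simp only [Nat.add_sub_cancel_left]
  constructor
  · funext p
    obtain ⟨a, r⟩ := p
    have ha := a.isLt
    rw [Matrix.add_mulVec]
    simp only [Pi.add_apply, Pi.smul_apply, smul_eq_mul]
    rw [dhalf_apply, cplus_apply m (2*(i+j)+1) hm _
      (fun b : Fin (2*(i+j)+1) =>
        if b.val < j then (0:ℂ) else if b.val = j then -2*i else if b.val ≤ i + j + i then 1 else 0)
      (fun q => rfl)]
    show (∑ b : Fin (2*(i+j)+1), (if a.val + b.val + 1 ≤ 2*(i+j)+1 then
        (if b.val < j then (0:ℂ) else if b.val = j then -2*i else if b.val ≤ i + j + i then 1 else 0)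
        else 0)) + (a.val : ℂ) *
        (if a.val < j then (0:ℂ) else if a.val = j then -2*i else if a.val ≤ i + j + i then 1 else 0)
      = (((i + j : ℕ) : ℂ) - i) *
        (if a.val < j then (0:ℂ) else if a.val = j then -2*i else if a.val ≤ i + j + i then 1 else 0)
    rw [Fin.sum_univ_eq_sum_range (fun k => if a.val + k + 1 ≤ 2*(i+j)+1 then
        (if k < j then (0:ℂ) else if k = j then -2*i else if k ≤ i + j + i then 1 else 0) else 0)]
    have hcond : ∀ k, (a.val + k + 1 ≤ 2*(i+j)+1) = (k < 2*(i+j)+1 - a.val) := by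
      intro k; exact propext (by omega)
    simp only [hcond]
    rw [sum_range_ite (2*(i+j)+1) (2*(i+j)+1 - a.val) (by omega), Tval i j hi1]
    by_cases haj : a.val = j
    · rw [haj, if_neg (lt_irrefl j), if_pos rfl, if_neg (by omega), if_pos (by omega)]
      push_cast [Nat.cast_sub (show j ≤ 2*(i+j)+1 by omega)]
      ring
    · split_ifs <;>
        first
        | (exfalso; omega)
        | (push_cast [Nat.cast_sub (show a.val ≤ 2*(i+j)+1 by omega)]; ring)
  · intro h
    have h0 := congrFun h (⟨j, by omega⟩, ⟨0, by omega⟩)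
    simp only [lt_irrefl, if_false, if_pos rfl, Pi.zero_apply] at h0
    have hiC : (i:ℂ) ≠ 0 := Nat.cast_ne_zero.mpr (by omega)
    have : (-2:ℂ) * i ≠ 0 := by
      intro hc
      rcases mul_eq_zero.1 hc with hc | hc
      · norm_num at hc
      · exact hiC hc
    exact this h0
end
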